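/- For any smooth vector field u : R^3 → R^3, setting σ := dev def u, one has sym curl σ = (1/2) def(curl u), where curl acts row-wise on matrix fields, def v := (grad v + (grad v)ᵀ)/2, and dev U = U - (1/3)tr(U)I. -/

import Mathlib

open Matrix MeasureTheory

noncomputable section

abbrev V3 : Type := Fin 3 → ℝ
abbrev M3 : Type := Matrix (Fin 3) (Fin 3) ℝ

/-- `mskw a` is the skew-symmetric matrix with `mskw a *ᵥ b = a ×₃ b`. -/
def mskw (a : V3) : M3 :=
  !![0, -a 2, a 1; a 2, 0, -a 0; -a 1, a 0, 0]

/-- Partial derivative `∂_j f` at `x`. -/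
def pd (j : Fin 3) (f : V3 → ℝ) (x : V3) : ℝ :=
  fderiv ℝ f x (Pi.single j 1)

/-- Curl of a vector field. -/
def curlVec (v : V3 → V3) (x : V3) : V3 :=
  ![pd 1 (fun y => v y 2) x - pd 2 (fun y => v y 1) x,
    pd 2 (fun y => v y 0) x - pd 0 (fun y => v y 2) x,
    pd 0 (fun y => v y 1) x - pd 1 (fun y => v y 0) x]

/-- Row-wise curl of a matrix field. -/
def curlMat (U : V3 → M3) (x : V3) : M3 :=
  Matrix.of fun i j => curlVec (fun y => U y i) x j

/-- `S U = Uᵀ - tr U • I`. -/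
def Smap (U : M3) : M3 := Uᵀ - U.trace • (1 : M3)

/-- `S⁻¹ U = Uᵀ - (1/2) tr U • I`. -/
def Sinv (U : M3) : M3 := Uᵀ - ((2:ℝ)⁻¹ * U.trace) • (1 : M3)

/-- Symmetric part. -/
def symPart (U : M3) : M3 := (2:ℝ)⁻¹ • (U + Uᵀ)

/-- Deviatoric (trace-free) part. -/
def devPart (U : M3) : M3 := U - ((3:ℝ)⁻¹ * U.trace) • (1 : M3)

/-- Row-wise gradient of a vector field: `(grad v)_{ij} = ∂_j v_i`. -/
def gradMat (v : V3 → V3) (x : V3) : M3 :=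
  Matrix.of fun i j => pd j (fun y => v y i) x

/-- Symmetric gradient `def v`. -/
def defSym (v : V3 → V3) (x : V3) : M3 := symPart (gradMat v x)

/-- Incompatibility operator `inc U = curl S⁻¹ curl U`. -/
def incMat (U : V3 → M3) (x : V3) : M3 :=
  curlMat (fun y => Sinv (curlMat U y)) x

/-- Linearized Cotton–York operator `cinc U = curl S⁻¹ curl S⁻¹ curl U`. -/
def cincMat (U : V3 → M3) (x : V3) : M3 :=
  curlMat (fun y => Sinv (incMat U y)) x

/-- `divdiv U = Σ_{ij} ∂_i ∂_j U_{ij}`. -/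
def divdiv (U : V3 → M3) (x : V3) : ℝ :=
  ∑ i, ∑ j, pd i (fun y => pd j (fun z => U z i j) y) x

/-- Conformal Killing field `(x·x)a - 2(a·x)x + b×x + cx + d`. -/
def CKfield (a b d : V3) (c : ℝ) : V3 → V3 :=
  fun x => (x ⬝ᵥ x) • a - (2 * (a ⬝ᵥ x)) • x + crossProduct b x + c • x + d

/-- Entry `(def u)_{ij}` of the symmetric gradient. -/
def defEntry (u : V3 → V3) (i j : Fin 3) (x : V3) : ℝ :=
  (pd j (fun y => u y i) x + pd i (fun y => u y j) x) / 2

/-- Entry `(dev def u)_{ij}`. -/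
def devDefEntry (u : V3 → V3) (i j : Fin 3) (x : V3) : ℝ :=
  defEntry u i j x - (if i = j then (3:ℝ)⁻¹ * ∑ k, pd k (fun y => u y k) x else 0)

/-- Iterated partial derivative along a list of directions. -/
def pds : List (Fin 3) → (V3 → ℝ) → V3 → ℝ
  | [], f => f
  | i :: l, f => pd i (pds l f)

/-- Orthogonal projection of `v` onto the plane with unit normal `n`. -/
def projV (n v : V3) : V3 := v - (n ⬝ᵥ v) • n

/-- Row-wise cross product `U × n`. -/
def rowCross (U : M3) (n : V3) : M3 := Matrix.of fun i => crossProduct (U i) n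

/-- Row-wise projection `U Π`. -/
def rowProj (U : M3) (n : V3) : M3 := Matrix.of fun i => projV n (U i)

/-- Frobenius inner product. -/
def frob (A B : M3) : ℝ := ∑ i, ∑ j, A i j * B i j

/-- Projection matrix `Π = I - n nᵀ`. -/
def Pmat (n : V3) : M3 := 1 - vecMulVec n n

/-- `sym curl σ`. -/
def symCurl (σ : V3 → M3) (x : V3) : M3 := symPart (curlMat σ x)

/-- Tangential partial derivative `(Π∇)_i f`. -/
def pdF (n : V3) (i : Fin 3) (f : V3 → ℝ) (x : V3) : ℝ :=
  pd i f x - n i * ∑ k, n k * pd k f x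

/-- Row-wise surface gradient of a vector field. -/
def gradFMat (n : V3) (u : V3 → V3) (x : V3) : M3 :=
  Matrix.of fun i j => pdF n j (fun y => u y i) x

/-- Surface symmetric gradient `def_F u`. -/
def defF (n : V3) (u : V3 → V3) (x : V3) : M3 := symPart (gradFMat n u x)

/-- Normal derivative of a matrix field, entrywise. -/
def dnMat (n : V3) (τ : V3 → M3) (x : V3) : M3 :=
  Matrix.of fun i j => fderiv ℝ (fun y => τ y i j) x n

/-- `tr₁ σ = sym(Π σ × n)`. -/
def tr1 (n : V3) (σ : V3 → M3) (x : V3) : M3 :=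
  symPart (rowCross (Pmat n * σ x) n)

/-- `tr₃ σ = 2 def_F(n·(sym curl σ)Π) - Π ∂ₙ(sym curl σ) Π`. -/
def tr3 (n : V3) (σ : V3 → M3) (x : V3) : M3 :=
  (2:ℝ) • defF n (fun y => projV n (Matrix.vecMul n (symCurl σ y))) x -
    Pmat n * dnMat n (symCurl σ) x * Pmat n

/-- `div_F div_F U`. -/
def divFdivF (n : V3) (U : V3 → M3) (x : V3) : ℝ :=
  ∑ i, ∑ j, pdF n i (fun y => pdF n j (fun z => U z i j) y) x


-- Auxiliary lemmas -----------------------------------------------------------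

lemma contDiff_pd' (f : V3 → ℝ) (hf : ContDiff ℝ (⊤ : ℕ∞) f) (j : Fin 3) :
    ContDiff ℝ (⊤ : ℕ∞) (pd j f) := by
  exact (ContinuousLinearMap.apply ℝ ℝ (Pi.single j 1)).contDiff.comp
    (hf.fderiv_right (m := (⊤ : ℕ∞)) (by simp))

lemma pd_comm' (f : V3 → ℝ) (hf : ContDiff ℝ (⊤ : ℕ∞) f) (i j : Fin 3) (x : V3) :
    pd i (pd j f) x = pd j (pd i f) x := by
  have hsym : IsSymmSndFDerivAt ℝ f x := hf.contDiffAt.isSymmSndFDerivAt (by rw [minSmoothness_of_isRCLikeNormedField]; exact WithTop.coe_le_coe.2 (le_top : (2 : ℕ∞) ≤ ⊤))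
  have hdf : DifferentiableAt ℝ (fderiv ℝ f) x :=
    ((hf.fderiv_right (m := (⊤ : ℕ∞)) (by simp)).differentiable (by simp)).differentiableAt
  have expand : ∀ v w : V3,
      fderiv ℝ (fun y => fderiv ℝ f y v) x w = fderiv ℝ (fderiv ℝ f) x w v := by
    intro v w
    rw [fderiv_clm_apply hdf (differentiableAt_const v)]
    simp
  have e1 : pd i (pd j f) x
      = fderiv ℝ (fun y => fderiv ℝ f y (Pi.single j 1)) x (Pi.single i 1) := rfl
  have e2 : pd j (pd i f) x
      = fderiv ℝ (fun y => fderiv ℝ f y (Pi.single i 1)) x (Pi.single j 1) := rfl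
  rw [e1, e2, expand, expand, hsym]

lemma pd_add' (k : Fin 3) (f g : V3 → ℝ) (x : V3)
    (hf : DifferentiableAt ℝ f x) (hg : DifferentiableAt ℝ g x) :
    pd k (fun y => f y + g y) x = pd k f x + pd k g x := by
  simp [pd, fderiv_fun_add hf hg]

lemma pd_sub' (k : Fin 3) (f g : V3 → ℝ) (x : V3)
    (hf : DifferentiableAt ℝ f x) (hg : DifferentiableAt ℝ g x) :
    pd k (fun y => f y - g y) x = pd k f x - pd k g x := by
  simp [pd, fderiv_fun_sub hf hg]

lemma pd_const_mul' (k : Fin 3) (c : ℝ) (f : V3 → ℝ) (x : V3)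
    (hf : DifferentiableAt ℝ f x) :
    pd k (fun y => c * f y) x = c * pd k f x := by
  simp [pd, fderiv_const_mul hf c]

lemma sigma_entry' (u : V3 → V3) (a b : Fin 3) (y : V3) :
    devPart (defSym u y) a b =
      (2:ℝ)⁻¹ * (pd b (fun z => u z a) y + pd a (fun z => u z b) y) -
        (if a = b then
          (3:ℝ)⁻¹ * (pd 0 (fun z => u z 0) y + pd 1 (fun z => u z 1) y +
            pd 2 (fun z => u z 2) y) else 0) := by
  simp only [devPart, defSym, symPart, gradMat, Matrix.sub_apply, Matrix.smul_apply,
    Matrix.add_apply, Matrix.one_apply, Matrix.transpose_apply, Matrix.of_apply,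
    Matrix.trace, Matrix.diag, smul_eq_mul]
  rw [Fin.sum_univ_three]
  by_cases h : a = b <;> simp [h] <;> ring

lemma pd_sigma' (u : V3 → V3) (hu : ContDiff ℝ (⊤ : ℕ∞) u) (k a b : Fin 3) (x : V3) :
    pd k (fun y => devPart (defSym u y) a b) x =
      (2:ℝ)⁻¹ * (pd k (pd b (fun z => u z a)) x + pd k (pd a (fun z => u z b)) x) -
        (if a = b then
          (3:ℝ)⁻¹ * (pd k (pd 0 (fun z => u z 0)) x + pd k (pd 1 (fun z => u z 1)) x +
            pd k (pd 2 (fun z => u z 2)) x) else 0) := by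
  have hc : ∀ c : Fin 3, ContDiff ℝ (⊤ : ℕ∞) (fun z => u z c) := fun c =>
    (contDiff_pi.1 hu) c
  have hd : ∀ (l c : Fin 3), DifferentiableAt ℝ (pd l (fun z => u z c)) x := fun l c =>
    ((contDiff_pd' _ (hc c) l).differentiable (by simp)).differentiableAt
  have hrw : (fun y => devPart (defSym u y) a b) =
      (fun y => (2:ℝ)⁻¹ * (pd b (fun z => u z a) y + pd a (fun z => u z b) y) -
        (if a = b then
          (3:ℝ)⁻¹ * (pd 0 (fun z => u z 0) y + pd 1 (fun z => u z 1) y +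
            pd 2 (fun z => u z 2) y) else 0)) := funext (sigma_entry' u a b)
  rw [hrw]
  by_cases h : a = b
  · simp only [h, if_true]
    rw [pd_sub', pd_const_mul', pd_const_mul', pd_add', pd_add', pd_add']
    all_goals fun_prop (disch := exact hd _ _)
  · simp only [h, if_false, sub_zero]
    rw [pd_const_mul', pd_add']
    all_goals fun_prop (disch := exact hd _ _)

lemma pd_curl' (u : V3 → V3) (hu : ContDiff ℝ (⊤ : ℕ∞) u) (k a b c d : Fin 3) (x : V3) :
    pd k (fun y => pd a (fun z => u z b) y - pd c (fun z => u z d) y) x =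
      pd k (pd a (fun z => u z b)) x - pd k (pd c (fun z => u z d)) x := by
  have hc : ∀ e : Fin 3, ContDiff ℝ (⊤ : ℕ∞) (fun z => u z e) := fun e => (contDiff_pi.1 hu) e
  exact pd_sub' k _ _ x
    (((contDiff_pd' _ (hc b) a).differentiable (by simp)).differentiableAt)
    (((contDiff_pd' _ (hc d) c).differentiable (by simp)).differentiableAt)

/-- `sym curl (dev def u) = (1/2) def (curl u)`. -/
theorem symCurl_devDef (u : V3 → V3) (hu : ContDiff ℝ (⊤ : ℕ∞) u) (x : V3) :
    symPart (curlMat (fun y => devPart (defSym u y)) x) =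
      (2:ℝ)⁻¹ • defSym (fun y => curlVec u y) x := by
  have hc : ∀ c : Fin 3, ContDiff ℝ (⊤ : ℕ∞) (fun z => u z c) := fun c => (contDiff_pi.1 hu) c
  have hC := fun (k l c : Fin 3) => pd_comm' (fun z => u z c) (hc c) k l x
  ext i j
  set σ : V3 → M3 := fun y => devPart (defSym u y) with hσ
  fin_cases i <;> fin_cases j <;>
  · simp [symPart, curlMat, curlVec, defSym, gradMat, Matrix.smul_apply,
      Matrix.add_apply, Matrix.transpose_apply, Matrix.of_apply, smul_eq_mul]
    simp only [hσ]
    simp only [pd_sigma' u hu, pd_curl' u hu]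
    norm_num [Fin.ext_iff]
    linarith [hC 0 1 0, hC 0 1 1, hC 0 1 2, hC 0 2 0, hC 0 2 1, hC 0 2 2,
      hC 1 2 0, hC 1 2 1, hC 1 2 2]
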